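/- Suppose 0 ≤ ρ < ρ̂₂. Then the infimum of g(t,s) over the region B̄ = {(t,s) : 0 < t ≤ s} equals g_L(t*) = (2/(1+ρ))(μ₁+μ₂+2/t*), and (t*, t*) is the unique minimizer of g on B̄. -/

import Mathlib

open Matrix

/-- The covariance matrix of `(X₁(t), X₂(s))`. -/
noncomputable def covM (ρ t s : ℝ) : Matrix (Fin 2) (Fin 2) ℝ :=
  !![t, ρ * min t s; ρ * min t s, s]

/-- The quadratic form `(x,y) Σ_{ts}⁻¹ (x,y)ᵀ`. -/
noncomputable def quadF (ρ t s x y : ℝ) : ℝ :=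
  dotProduct ![x, y] ((covM ρ t s)⁻¹.mulVec ![x, y])

/-- `g(t,s) = inf{ (x,y) Σ_{ts}⁻¹ (x,y)ᵀ : x ≥ 1+μ₁t, y ≥ 1+μ₂s }`. -/
noncomputable def gFun (μ₁ μ₂ ρ t s : ℝ) : ℝ :=
  sInf { q : ℝ | ∃ x y : ℝ, 1 + μ₁ * t ≤ x ∧ 1 + μ₂ * s ≤ y ∧ q = quadF ρ t s x y }

/-- `g₃(t,s)`: the quadratic form at the corner point `(1+μ₁t, 1+μ₂s)`. -/
noncomputable def g3Fun (μ₁ μ₂ ρ t s : ℝ) : ℝ :=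
  quadF ρ t s (1 + μ₁ * t) (1 + μ₂ * s)

/-- `g_L(s)`: the value of `g₃` on the diagonal. -/
noncomputable def gLFun (μ₁ μ₂ ρ s : ℝ) : ℝ :=
  ((1 + μ₁ * s) ^ 2 + (1 + μ₂ * s) ^ 2 - 2 * ρ * (1 + μ₁ * s) * (1 + μ₂ * s))
    / ((1 - ρ ^ 2) * s)

/-!
Let `b = (1 + μ₁t, 1 + μ₂s)` be the corner of the feasible quadrant. For every direction
`L = (L₁, L₂)` with nonnegative entries, Cauchy–Schwarz for the inner product `Σ_{ts}⁻¹` gives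
`g(t, s) ≥ (L·b)² / (L Σ_{ts} Lᵀ)`. Take for `L` the direction in which this bound is attained at
`(m, m)`, `m = t*`; the condition `ρ < ρ̂₂` makes it positive. With `P = L Σ_{11} Lᵀ` and
`T = μ₁L₁ + μ₂L₂` one has `P (L·b) = A + T (L Σ_{ts} Lᵀ) + C (s - t)` with `A = P (L₁ + L₂)` and
`C ≥ 0`, and the equation `(μ₁² + μ₂² - 2ρμ₁μ₂) m² = 2(1 - ρ)` defining `m` gives
`P² = 2(1 - ρ²) A`. AM–GM then yields `(L·b)² ≥ g_L(m) · L Σ_{ts} Lᵀ`; when `C > 0`, that is unless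
`ρ = 0` and `μ₁ = μ₂`, equality forces `s = t = m`. In that remaining case
`g(t, s) = (1 + μ₁t)²/t + (1 + μ₁s)²/s`, whose terms are minimised separately at `1/μ₁ = m`.
-/

variable {μ₁ μ₂ ρ m t s x y : ℝ}

theorem covM_of_le (hts : t ≤ s) : covM ρ t s = !![t, ρ * t; ρ * t, s] := by
  rw [covM, min_eq_left hts]

theorem quadF_of_le (hts : t ≤ s) :
    quadF ρ t s x y = (s * x ^ 2 - 2 * ρ * t * x * y + t * y ^ 2) / (t * (s - ρ ^ 2 * t)) := by
  rw [quadF, covM_of_le hts, Matrix.inv_def, det_fin_two_of, adjugate_fin_two_of,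
    Ring.inverse_eq_inv, smul_mulVec, vec2_dotProduct]
  simp only [mulVec_cons, mulVec_empty, Pi.smul_apply, Pi.add_apply, Function.comp_apply,
    cons_val_zero, cons_val_one, head_cons, tail_cons, smul_eq_mul, add_zero]
  ring

theorem quadF_diag (hρ : ρ ^ 2 < 1) (hm : 0 < m) :
    quadF ρ m m (1 + μ₁ * m) (1 + μ₂ * m) = gLFun μ₁ μ₂ ρ m := by
  have h : 1 - ρ ^ 2 ≠ 0 := by nlinarith
  rw [quadF_of_le le_rfl, gLFun]
  field_simp
  ring

theorem quadF_zero (ht : 0 < t) (hts : t ≤ s) : quadF 0 t s x y = x ^ 2 / t + y ^ 2 / s := by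
  have hs := (ht.trans_le hts).ne'
  rw [quadF_of_le hts, zero_pow two_ne_zero, zero_mul, sub_zero]
  field_simp
  ring

/-- `(u, v) Σ_{ts} (u, v)ᵀ` when `t ≤ s`. -/
def covForm (ρ t s u v : ℝ) : ℝ := (u ^ 2 + 2 * ρ * u * v) * t + v ^ 2 * s

theorem covForm_pos {u v : ℝ} (hρ : 0 ≤ ρ) (hu : 0 ≤ u) (hv : 0 < v) (ht : 0 ≤ t) (hs : 0 < s) :
    0 < covForm ρ t s u v := by
  unfold covForm
  positivity

theorem covForm_one_mul_eq (μ₁ μ₂ ρ t s u v : ℝ) :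
    covForm ρ 1 1 u v * (u * (1 + μ₁ * t) + v * (1 + μ₂ * s))
      = covForm ρ 1 1 u v * (u + v) + (μ₁ * u + μ₂ * v) * covForm ρ t s u v
        + u * v * (μ₂ * u + (2 * ρ * μ₂ - μ₁) * v) * (s - t) := by
  unfold covForm
  ring

theorem sq_add_le_quadF_mul_covForm (u v : ℝ) (ht : 0 < t) (hts : t ≤ s) (hρ : ρ ^ 2 < 1) :
    (u * x + v * y) ^ 2 ≤ quadF ρ t s x y * covForm ρ t s u v := by
  have hD : 0 < t * (s - ρ ^ 2 * t) := mul_pos ht (by nlinarith)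
  rw [quadF_of_le hts, div_mul_eq_mul_div, le_div_iff₀ hD, covForm]
  linarith [sq_nonneg (x * (ρ * t * u + s * v) - y * (t * u + ρ * t * v))]

theorem sq_div_covForm_le_quadF {u v a b : ℝ} (hu : 0 ≤ u) (hv : 0 ≤ v)
    (hW : 0 < covForm ρ t s u v) (ht : 0 < t) (hts : t ≤ s) (hρ : ρ ^ 2 < 1)
    (ha : 0 ≤ a) (hb : 0 ≤ b) (hx : a ≤ x) (hy : b ≤ y) :
    (u * a + v * b) ^ 2 / covForm ρ t s u v ≤ quadF ρ t s x y := by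
  rw [div_le_iff₀ hW]
  calc (u * a + v * b) ^ 2 ≤ (u * x + v * y) ^ 2 := by gcongr
    _ ≤ _ := sq_add_le_quadF_mul_covForm u v ht hts hρ

theorem le_gFun {c : ℝ}
    (h : ∀ x y, 1 + μ₁ * t ≤ x → 1 + μ₂ * s ≤ y → c ≤ quadF ρ t s x y) :
    c ≤ gFun μ₁ μ₂ ρ t s := by
  refine le_csInf ⟨_, _, _, le_rfl, le_rfl, rfl⟩ ?_
  rintro _ ⟨x, y, hx, hy, rfl⟩
  exact h x y hx hy

theorem gFun_le_quadF {c : ℝ}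
    (h : ∀ x y, 1 + μ₁ * t ≤ x → 1 + μ₂ * s ≤ y → c ≤ quadF ρ t s x y) :
    gFun μ₁ μ₂ ρ t s ≤ quadF ρ t s (1 + μ₁ * t) (1 + μ₂ * s) := by
  refine csInf_le ⟨c, ?_⟩ ⟨_, _, le_rfl, le_rfl, rfl⟩
  rintro _ ⟨x, y, hx, hy, rfl⟩
  exact h x y hx hy

theorem two_mul_le_mul_sq_of_mul_eq_add {k P G a b c : ℝ} (hk : 0 < k) (hP : P ≠ 0)
    (hPa : P ^ 2 = 2 * k * a) (hPG : P * G = a + b + c) (hb : 0 ≤ b) (hc : 0 ≤ c) :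
    2 * b ≤ k * G ^ 2 := by
  have hP2 : 0 < P ^ 2 := by positivity
  have ha : 0 ≤ a := by nlinarith
  refine le_of_mul_le_mul_left ?_ hP2
  calc P ^ 2 * (2 * b) = k * (4 * a * b) := by rw [hPa]; ring
    _ ≤ k * (a + b + c) ^ 2 := by gcongr; nlinarith [four_mul_le_sq_add a b]
    _ = P ^ 2 * (k * G ^ 2) := by rw [← hPG]; ring

theorem eq_of_mul_sq_eq_two_mul {k P G a b c : ℝ} (hk : 0 < k)
    (hPa : P ^ 2 = 2 * k * a) (hPG : P * G = a + b + c) (hb : 0 ≤ b) (hc : 0 ≤ c)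
    (h : k * G ^ 2 = 2 * b) :
    c = 0 ∧ a = b := by
  have ha : 0 ≤ a := by nlinarith [sq_nonneg P]
  have hsum : k * ((a - b) ^ 2 + c ^ 2 + 2 * c * (a + b)) = 0 := by
    linear_combination (-k * (P * G + a + b + c)) * hPG + P ^ 2 * h + 2 * b * hPa
  have hsum' : (a - b) ^ 2 + c ^ 2 + 2 * c * (a + b) = 0 := by
    simpa [hk.ne'] using hsum
  constructor <;> nlinarith [sq_nonneg (a - b), sq_nonneg c, mul_nonneg hc (add_nonneg ha hb)]

theorem sq_one_add_mul_div {μ : ℝ} (ht : t ≠ 0) :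
    (1 + μ * t) ^ 2 / t = 4 * μ + (1 - μ * t) ^ 2 / t := by
  field_simp
  ring

theorem gLFun_lt_gFun_zero {μ : ℝ} (hμ : 0 < μ) (hμm : μ * m = 1) (ht : 0 < t) (hts : t ≤ s)
    (hne : ¬(t = m ∧ s = m)) :
    gLFun μ μ 0 m < gFun μ μ 0 t s := by
  have hs := ht.trans_le hts
  have hm : m ≠ 0 := by rintro rfl; simp at hμm
  have hval : gLFun μ μ 0 m = 8 * μ := by
    rw [gLFun, hμm]
    field_simp
    linarith
  have hgap : 0 < (1 - μ * t) ^ 2 / t + (1 - μ * s) ^ 2 / s := by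
    rcases not_and_or.1 hne with h | h
    · have : 1 - μ * t ≠ 0 := fun h' => h (mul_left_cancel₀ hμ.ne' (by linarith))
      positivity
    · have : 1 - μ * s ≠ 0 := fun h' => h (mul_left_cancel₀ hμ.ne' (by linarith))
      positivity
  have hlow : 8 * μ + ((1 - μ * t) ^ 2 / t + (1 - μ * s) ^ 2 / s) ≤ gFun μ μ 0 t s := by
    refine le_gFun fun x y hx hy => ?_
    calc 8 * μ + ((1 - μ * t) ^ 2 / t + (1 - μ * s) ^ 2 / s)
        = (1 + μ * t) ^ 2 / t + (1 + μ * s) ^ 2 / s := by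
          rw [sq_one_add_mul_div ht.ne', sq_one_add_mul_div hs.ne']; ring
      _ ≤ x ^ 2 / t + y ^ 2 / s := by gcongr
      _ = quadF 0 t s x y := (quadF_zero ht hts).symm
  linarith

theorem sq_add_sq_sub_two_mul_mul_pos (hμ₁ : 0 < μ₁) (hμ₂ : 0 < μ₂) (hρ : ρ < 1) :
    0 < μ₁ ^ 2 + μ₂ ^ 2 - 2 * ρ * μ₁ * μ₂ := by
  nlinarith [sq_nonneg (μ₁ - μ₂), mul_pos (mul_pos hμ₁ hμ₂) (sub_pos.2 hρ)]

/-- `(gradCoeff μ₁ μ₂ ρ m, gradCoeff μ₂ μ₁ ρ m) = (1 - ρ²) m · (1 + μ₁m, 1 + μ₂m) Σ_{mm}⁻¹`: the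
Cauchy–Schwarz bound along this vector is attained at the corner point of `(m, m)`. -/
def gradCoeff (μ ν ρ m : ℝ) : ℝ := 1 + μ * m - ρ * (1 + ν * m)

section gradCoeff

local notation "L₁" => gradCoeff μ₁ μ₂ ρ m
local notation "L₂" => gradCoeff μ₂ μ₁ ρ m

theorem gradCoeff_pos_of_le (hμ₁ : 0 < μ₁) (hμ : μ₁ ≤ μ₂) (hρ₁ : ρ < 1) (hm : 0 < m) :
    0 < L₂ := by
  unfold gradCoeff
  nlinarith [mul_pos (mul_pos hμ₁ (sub_pos.2 hρ₁)) hm, mul_nonneg (sub_nonneg.2 hμ) hm.le]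

theorem gradCoeff_pos (hμ₁ : 0 < μ₁) (hμ : μ₁ ≤ μ₂) (hρ₁ : ρ < 1)
    (hρ₂ : 2 * ρ * μ₂ < μ₁ + μ₂) (hm : 0 < m)
    (hcm : (μ₁ ^ 2 + μ₂ ^ 2 - 2 * ρ * μ₁ * μ₂) * m ^ 2 = 2 * (1 - ρ)) :
    0 < L₁ := by
  unfold gradCoeff
  rcases le_or_gt (ρ * μ₂) μ₁ with h | h
  · nlinarith [mul_nonneg (sub_nonneg.2 h) hm.le]
  have hμ₂ : 0 < μ₂ := hμ₁.trans_le hμ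
  have hρ : 0 < ρ := pos_of_mul_pos_left (hμ₁.trans h) hμ₂.le
  have hc := sq_add_sq_sub_two_mul_mul_pos hμ₁ hμ₂ hρ₁
  have hsq : (μ₁ ^ 2 + μ₂ ^ 2 - 2 * ρ * μ₁ * μ₂) * ((1 - ρ) ^ 2 - ((ρ * μ₂ - μ₁) * m) ^ 2)
      = (1 - ρ) * (1 + ρ) * (μ₂ - μ₁) * (μ₁ + μ₂ - 2 * ρ * μ₂) := by
    linear_combination (-(ρ * μ₂ - μ₁) ^ 2) * hcm
  have hpos : 0 < (1 - ρ) * (1 + ρ) * (μ₂ - μ₁) * (μ₁ + μ₂ - 2 * ρ * μ₂) := by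
    have : μ₁ < μ₂ := by nlinarith
    apply_rules [mul_pos] <;> linarith
  rw [← hsq] at hpos
  have hlt : ((ρ * μ₂ - μ₁) * m) ^ 2 < (1 - ρ) ^ 2 := by
    nlinarith [(pos_iff_pos_of_mul_pos hpos).1 hc]
  nlinarith [abs_lt_of_sq_lt_sq' hlt (by linarith)]

theorem gradCoeff_comb_eq :
    μ₂ * L₁ + (2 * ρ * μ₂ - μ₁) * L₂
      = (1 - ρ) * (μ₂ - μ₁ + 2 * ρ * μ₂) + ρ * (μ₁ ^ 2 + μ₂ ^ 2 - 2 * ρ * μ₁ * μ₂) * m := by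
  unfold gradCoeff
  ring

theorem gradCoeff_comb_nonneg (hμ₁ : 0 < μ₁) (hμ : μ₁ ≤ μ₂) (hρ₀ : 0 ≤ ρ) (hρ₁ : ρ < 1)
    (hm : 0 < m) :
    0 ≤ μ₂ * L₁ + (2 * ρ * μ₂ - μ₁) * L₂ := by
  have hμ₂ : 0 < μ₂ := hμ₁.trans_le hμ
  have hc := sq_add_sq_sub_two_mul_mul_pos hμ₁ hμ₂ hρ₁
  rw [gradCoeff_comb_eq]
  nlinarith [mul_nonneg (mul_nonneg hρ₀ hc.le) hm.le, mul_nonneg hρ₀ hμ₂.le]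

theorem gradCoeff_comb_pos (hμ₁ : 0 < μ₁) (hμ : μ₁ ≤ μ₂) (hρ₀ : 0 ≤ ρ) (hρ₁ : ρ < 1)
    (hm : 0 < m) (hnd : 0 < ρ ∨ μ₁ < μ₂) :
    0 < μ₂ * L₁ + (2 * ρ * μ₂ - μ₁) * L₂ := by
  have hμ₂ : 0 < μ₂ := hμ₁.trans_le hμ
  have hc := sq_add_sq_sub_two_mul_mul_pos hμ₁ hμ₂ hρ₁
  rw [gradCoeff_comb_eq]
  rcases hnd with hρ | hμlt
  · nlinarith [mul_pos (mul_pos hρ hc) hm, mul_pos hρ hμ₂]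
  · nlinarith [mul_nonneg (mul_nonneg hρ₀ hc.le) hm.le, mul_nonneg hρ₀ hμ₂.le]

theorem gradCoeff_add (hcm : (μ₁ ^ 2 + μ₂ ^ 2 - 2 * ρ * μ₁ * μ₂) * m ^ 2 = 2 * (1 - ρ)) :
    L₁ + L₂ = (μ₁ * L₁ + μ₂ * L₂) * m := by
  unfold gradCoeff
  linear_combination -hcm

theorem covForm_one_gradCoeff (hcm : (μ₁ ^ 2 + μ₂ ^ 2 - 2 * ρ * μ₁ * μ₂) * m ^ 2 = 2 * (1 - ρ)) :
    covForm ρ 1 1 L₁ L₂ = 2 * (1 - ρ ^ 2) * (L₁ + L₂) := by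
  unfold covForm gradCoeff
  linear_combination (1 - ρ ^ 2) * hcm

theorem gLFun_eq_gradCoeff (hρ : ρ ^ 2 < 1) (hm : m ≠ 0)
    (hcm : (μ₁ ^ 2 + μ₂ ^ 2 - 2 * ρ * μ₁ * μ₂) * m ^ 2 = 2 * (1 - ρ)) :
    gLFun μ₁ μ₂ ρ m = 2 * (μ₁ * L₁ + μ₂ * L₂) / (1 - ρ ^ 2) := by
  have h : 1 - ρ ^ 2 ≠ 0 := by nlinarith
  rw [gLFun, div_eq_div_iff (mul_ne_zero h hm) h]
  unfold gradCoeff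
  linear_combination (-(1 - ρ ^ 2)) * hcm

theorem gLFun_eq (hρ : ρ ^ 2 < 1) (hm : m ≠ 0)
    (hcm : (μ₁ ^ 2 + μ₂ ^ 2 - 2 * ρ * μ₁ * μ₂) * m ^ 2 = 2 * (1 - ρ)) :
    gLFun μ₁ μ₂ ρ m = 2 / (1 + ρ) * (μ₁ + μ₂ + 2 / m) := by
  have h₁ : 1 - ρ ≠ 0 := by nlinarith
  have h₂ : 1 + ρ ≠ 0 := by nlinarith
  rw [gLFun, show 1 - ρ ^ 2 = (1 - ρ) * (1 + ρ) by ring]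
  field_simp
  linear_combination hcm

theorem gLFun_mul_covForm_le (hμ₁ : 0 < μ₁) (hμ : μ₁ ≤ μ₂) (hρ₀ : 0 ≤ ρ) (hρ₁ : ρ < 1)
    (hρ₂ : 2 * ρ * μ₂ < μ₁ + μ₂) (hm : 0 < m)
    (hcm : (μ₁ ^ 2 + μ₂ ^ 2 - 2 * ρ * μ₁ * μ₂) * m ^ 2 = 2 * (1 - ρ)) (ht : 0 < t) (hts : t ≤ s) :
    gLFun μ₁ μ₂ ρ m * covForm ρ t s L₁ L₂ ≤ (L₁ * (1 + μ₁ * t) + L₂ * (1 + μ₂ * s)) ^ 2 := by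
  have hL₁ := gradCoeff_pos hμ₁ hμ hρ₁ hρ₂ hm hcm
  have hL₂ := gradCoeff_pos_of_le hμ₁ hμ hρ₁ hm
  have hμ₂ : 0 < μ₂ := hμ₁.trans_le hμ
  have hρ : 0 < 1 - ρ ^ 2 := by nlinarith
  have hP := covForm_one_gradCoeff hcm
  have key := two_mul_le_mul_sq_of_mul_eq_add hρ (by rw [hP]; positivity)
    (by rw [hP]; ring) (covForm_one_mul_eq μ₁ μ₂ ρ t s L₁ L₂)
    (mul_nonneg (by positivity) (covForm_pos hρ₀ hL₁.le hL₂ ht.le (ht.trans_le hts)).le)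
    (mul_nonneg (mul_nonneg (mul_nonneg hL₁.le hL₂.le)
      (gradCoeff_comb_nonneg hμ₁ hμ hρ₀ hρ₁ hm)) (sub_nonneg.2 hts))
  rw [gLFun_eq_gradCoeff (by nlinarith) hm.ne' hcm, div_mul_eq_mul_div, div_le_iff₀ hρ]
  linarith

theorem eq_of_gLFun_mul_covForm_eq (hμ₁ : 0 < μ₁) (hμ : μ₁ ≤ μ₂) (hρ₀ : 0 ≤ ρ) (hρ₁ : ρ < 1)
    (hρ₂ : 2 * ρ * μ₂ < μ₁ + μ₂) (hm : 0 < m)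
    (hcm : (μ₁ ^ 2 + μ₂ ^ 2 - 2 * ρ * μ₁ * μ₂) * m ^ 2 = 2 * (1 - ρ)) (hnd : 0 < ρ ∨ μ₁ < μ₂)
    (ht : 0 < t) (hts : t ≤ s)
    (h : gLFun μ₁ μ₂ ρ m * covForm ρ t s L₁ L₂ = (L₁ * (1 + μ₁ * t) + L₂ * (1 + μ₂ * s)) ^ 2) :
    t = m ∧ s = m := by
  have hL₁ := gradCoeff_pos hμ₁ hμ hρ₁ hρ₂ hm hcm
  have hL₂ := gradCoeff_pos_of_le hμ₁ hμ hρ₁ hm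
  have hμ₂ : 0 < μ₂ := hμ₁.trans_le hμ
  have hρ : 0 < 1 - ρ ^ 2 := by nlinarith
  have hP := covForm_one_gradCoeff hcm
  have hK := gradCoeff_comb_pos hμ₁ hμ hρ₀ hρ₁ hm hnd
  rw [gLFun_eq_gradCoeff (by nlinarith) hm.ne' hcm, div_mul_eq_mul_div, div_eq_iff hρ.ne'] at h
  obtain ⟨hc, hab⟩ := eq_of_mul_sq_eq_two_mul hρ (by rw [hP]; ring)
    (covForm_one_mul_eq μ₁ μ₂ ρ t s L₁ L₂)
    (mul_nonneg (by positivity) (covForm_pos hρ₀ hL₁.le hL₂ ht.le (ht.trans_le hts)).le)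
    (mul_nonneg (by positivity) (sub_nonneg.2 hts)) (by linarith)
  obtain rfl : s = t := by
    have := (mul_eq_zero.1 hc).resolve_left (by positivity)
    linarith
  have hdiag : covForm ρ s s L₁ L₂ = s * covForm ρ 1 1 L₁ L₂ := by unfold covForm; ring
  rw [hdiag, gradCoeff_add hcm, hP] at hab
  have hsm : m = s := by
    refine mul_left_cancel₀ (?_ : 2 * (1 - ρ ^ 2) * (L₁ + L₂) * (μ₁ * L₁ + μ₂ * L₂) ≠ 0) ?_
    · positivity
    · linear_combination hab
  exact ⟨hsm.symm, hsm.symm⟩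

theorem gLFun_le_quadF (hμ₁ : 0 < μ₁) (hμ : μ₁ ≤ μ₂) (hρ₀ : 0 ≤ ρ) (hρ₁ : ρ < 1)
    (hρ₂ : 2 * ρ * μ₂ < μ₁ + μ₂) (hm : 0 < m)
    (hcm : (μ₁ ^ 2 + μ₂ ^ 2 - 2 * ρ * μ₁ * μ₂) * m ^ 2 = 2 * (1 - ρ)) (ht : 0 < t) (hts : t ≤ s)
    (hx : 1 + μ₁ * t ≤ x) (hy : 1 + μ₂ * s ≤ y) :
    gLFun μ₁ μ₂ ρ m ≤ quadF ρ t s x y := by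
  have hL₁ := gradCoeff_pos hμ₁ hμ hρ₁ hρ₂ hm hcm
  have hL₂ := gradCoeff_pos_of_le hμ₁ hμ hρ₁ hm
  have hs := ht.trans_le hts
  have hμ₂ : 0 < μ₂ := hμ₁.trans_le hμ
  have hW := covForm_pos hρ₀ hL₁.le hL₂ ht.le hs
  calc gLFun μ₁ μ₂ ρ m ≤ (L₁ * (1 + μ₁ * t) + L₂ * (1 + μ₂ * s)) ^ 2 / covForm ρ t s L₁ L₂ :=
        (le_div_iff₀ hW).2 (gLFun_mul_covForm_le hμ₁ hμ hρ₀ hρ₁ hρ₂ hm hcm ht hts)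
    _ ≤ quadF ρ t s x y :=
        sq_div_covForm_le_quadF hL₁.le hL₂.le hW ht hts (by nlinarith) (by positivity)
          (by positivity) hx hy

theorem gLFun_lt_gFun (hμ₁ : 0 < μ₁) (hμ : μ₁ ≤ μ₂) (hρ₀ : 0 ≤ ρ) (hρ₁ : ρ < 1)
    (hρ₂ : 2 * ρ * μ₂ < μ₁ + μ₂) (hm : 0 < m)
    (hcm : (μ₁ ^ 2 + μ₂ ^ 2 - 2 * ρ * μ₁ * μ₂) * m ^ 2 = 2 * (1 - ρ)) (hnd : 0 < ρ ∨ μ₁ < μ₂)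
    (ht : 0 < t) (hts : t ≤ s) (hne : ¬(t = m ∧ s = m)) :
    gLFun μ₁ μ₂ ρ m < gFun μ₁ μ₂ ρ t s := by
  have hL₁ := gradCoeff_pos hμ₁ hμ hρ₁ hρ₂ hm hcm
  have hL₂ := gradCoeff_pos_of_le hμ₁ hμ hρ₁ hm
  have hs := ht.trans_le hts
  have hμ₂ : 0 < μ₂ := hμ₁.trans_le hμ
  have hW := covForm_pos hρ₀ hL₁.le hL₂ ht.le hs
  calc gLFun μ₁ μ₂ ρ m < (L₁ * (1 + μ₁ * t) + L₂ * (1 + μ₂ * s)) ^ 2 / covForm ρ t s L₁ L₂ :=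
        (lt_div_iff₀ hW).2 <| (gLFun_mul_covForm_le hμ₁ hμ hρ₀ hρ₁ hρ₂ hm hcm ht hts).lt_of_ne
          fun h => hne (eq_of_gLFun_mul_covForm_eq hμ₁ hμ hρ₀ hρ₁ hρ₂ hm hcm hnd ht hts h)
    _ ≤ gFun μ₁ μ₂ ρ t s := le_gFun fun x y hx hy =>
        sq_div_covForm_le_quadF hL₁.le hL₂.le hW ht hts (by nlinarith) (by positivity)
          (by positivity) hx hy

end gradCoeff

theorem stmt15_general (μ₁ μ₂ ρ : ℝ) (hμ1 : 0 < μ₁) (hμ12 : μ₁ ≤ μ₂)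
    (hρu : ρ < 1) (hρ0 : 0 ≤ ρ) (hρ2 : ρ < (μ₁ + μ₂) / (2 * μ₂)) :
    IsLeast { v : ℝ | ∃ t s : ℝ, 0 < t ∧ t ≤ s ∧ v = gFun μ₁ μ₂ ρ t s }
      (gLFun μ₁ μ₂ ρ (Real.sqrt (2 * (1 - ρ) / (μ₁ ^ 2 + μ₂ ^ 2 - 2 * ρ * μ₁ * μ₂)))) ∧
    gLFun μ₁ μ₂ ρ (Real.sqrt (2 * (1 - ρ) / (μ₁ ^ 2 + μ₂ ^ 2 - 2 * ρ * μ₁ * μ₂)))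
      = 2 / (1 + ρ) * (μ₁ + μ₂ +
          2 / Real.sqrt (2 * (1 - ρ) / (μ₁ ^ 2 + μ₂ ^ 2 - 2 * ρ * μ₁ * μ₂))) ∧
    gFun μ₁ μ₂ ρ (Real.sqrt (2 * (1 - ρ) / (μ₁ ^ 2 + μ₂ ^ 2 - 2 * ρ * μ₁ * μ₂)))
        (Real.sqrt (2 * (1 - ρ) / (μ₁ ^ 2 + μ₂ ^ 2 - 2 * ρ * μ₁ * μ₂)))
      = gLFun μ₁ μ₂ ρ (Real.sqrt (2 * (1 - ρ) / (μ₁ ^ 2 + μ₂ ^ 2 - 2 * ρ * μ₁ * μ₂))) ∧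
    (∀ t s : ℝ, 0 < t → t ≤ s →
      gFun μ₁ μ₂ ρ t s
        = gLFun μ₁ μ₂ ρ (Real.sqrt (2 * (1 - ρ) / (μ₁ ^ 2 + μ₂ ^ 2 - 2 * ρ * μ₁ * μ₂))) →
      t = Real.sqrt (2 * (1 - ρ) / (μ₁ ^ 2 + μ₂ ^ 2 - 2 * ρ * μ₁ * μ₂)) ∧
      s = Real.sqrt (2 * (1 - ρ) / (μ₁ ^ 2 + μ₂ ^ 2 - 2 * ρ * μ₁ * μ₂))) := by
  have hρ : ρ ^ 2 < 1 := by nlinarith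
  have hρ₂ : 2 * ρ * μ₂ < μ₁ + μ₂ := by
    rw [lt_div_iff₀ (by linarith)] at hρ2
    linarith
  have hc := sq_add_sq_sub_two_mul_mul_pos hμ1 (hμ1.trans_le hμ12) hρu
  set m := Real.sqrt (2 * (1 - ρ) / (μ₁ ^ 2 + μ₂ ^ 2 - 2 * ρ * μ₁ * μ₂))
  have hm : 0 < m := Real.sqrt_pos.2 (div_pos (by linarith) hc)
  have hcm : (μ₁ ^ 2 + μ₂ ^ 2 - 2 * ρ * μ₁ * μ₂) * m ^ 2 = 2 * (1 - ρ) := by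
    rw [Real.sq_sqrt (div_pos (by linarith) hc).le, mul_div_cancel₀ _ hc.ne']
  have hlow : ∀ t s, 0 < t → t ≤ s → ∀ x y, 1 + μ₁ * t ≤ x → 1 + μ₂ * s ≤ y →
      gLFun μ₁ μ₂ ρ m ≤ quadF ρ t s x y := fun t s ht hts x y hx hy =>
    gLFun_le_quadF hμ1 hμ12 hρ0 hρu hρ₂ hm hcm ht hts hx hy
  have hmin : gFun μ₁ μ₂ ρ m m = gLFun μ₁ μ₂ ρ m :=
    le_antisymm ((gFun_le_quadF (hlow m m hm le_rfl)).trans_eq (quadF_diag hρ hm))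
      (le_gFun (hlow m m hm le_rfl))
  refine ⟨⟨⟨m, m, hm, le_rfl, hmin.symm⟩, ?_⟩, gLFun_eq hρ hm.ne' hcm, hmin, ?_⟩
  · rintro _ ⟨t, s, ht, hts, rfl⟩
    exact le_gFun (hlow t s ht hts)
  · intro t s ht hts heq
    by_contra hne
    by_cases hnd : 0 < ρ ∨ μ₁ < μ₂
    · exact (gLFun_lt_gFun hμ1 hμ12 hρ0 hρu hρ₂ hm hcm hnd ht hts hne).ne' heq
    · obtain ⟨rfl, rfl⟩ : ρ = 0 ∧ μ₁ = μ₂ := by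
        push Not at hnd
        exact ⟨le_antisymm hnd.1 hρ0, le_antisymm hμ12 hnd.2⟩
      have hμm : μ₁ * m = 1 := by nlinarith [mul_pos hμ1 hm]
      exact (gLFun_lt_gFun_zero hμ1 hμm ht hts hne).ne' heq

theorem stmt15 (μ₁ μ₂ ρ : ℝ) (hμ1 : 0 < μ₁) (hμ12 : μ₁ ≤ μ₂)
    (hρl : -1 < ρ) (hρu : ρ < 1) (hρ0 : 0 ≤ ρ) (hρ2 : ρ < (μ₁ + μ₂) / (2 * μ₂)) :
    IsLeast { v : ℝ | ∃ t s : ℝ, 0 < t ∧ t ≤ s ∧ v = gFun μ₁ μ₂ ρ t s }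
      (gLFun μ₁ μ₂ ρ (Real.sqrt (2 * (1 - ρ) / (μ₁ ^ 2 + μ₂ ^ 2 - 2 * ρ * μ₁ * μ₂)))) ∧
    gLFun μ₁ μ₂ ρ (Real.sqrt (2 * (1 - ρ) / (μ₁ ^ 2 + μ₂ ^ 2 - 2 * ρ * μ₁ * μ₂)))
      = 2 / (1 + ρ) * (μ₁ + μ₂ +
          2 / Real.sqrt (2 * (1 - ρ) / (μ₁ ^ 2 + μ₂ ^ 2 - 2 * ρ * μ₁ * μ₂))) ∧
    gFun μ₁ μ₂ ρ (Real.sqrt (2 * (1 - ρ) / (μ₁ ^ 2 + μ₂ ^ 2 - 2 * ρ * μ₁ * μ₂)))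
        (Real.sqrt (2 * (1 - ρ) / (μ₁ ^ 2 + μ₂ ^ 2 - 2 * ρ * μ₁ * μ₂)))
      = gLFun μ₁ μ₂ ρ (Real.sqrt (2 * (1 - ρ) / (μ₁ ^ 2 + μ₂ ^ 2 - 2 * ρ * μ₁ * μ₂))) ∧
    (∀ t s : ℝ, 0 < t → t ≤ s →
      gFun μ₁ μ₂ ρ t s
        = gLFun μ₁ μ₂ ρ (Real.sqrt (2 * (1 - ρ) / (μ₁ ^ 2 + μ₂ ^ 2 - 2 * ρ * μ₁ * μ₂))) →
      t = Real.sqrt (2 * (1 - ρ) / (μ₁ ^ 2 + μ₂ ^ 2 - 2 * ρ * μ₁ * μ₂)) ∧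
      s = Real.sqrt (2 * (1 - ρ) / (μ₁ ^ 2 + μ₂ ^ 2 - 2 * ρ * μ₁ * μ₂))) :=
  stmt15_general μ₁ μ₂ ρ hμ1 hμ12 hρu hρ0 hρ2
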